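/- Let u, U : Ω → ℝ be C² functions on an open set Ω ⊆ ℝ² on which y ≠ 0, satisfying u_x² + U_x² = y², u_x·u_y + U_x·U_y = 0, and u_y² + U_y² = 1 throughout Ω. Then u_yy = 0 and U_yy = 0 on Ω; in particular u and U are affine in the variable y along vertical lines in Ω. -/

import Mathlib

/-!
Write `g(v, w) = Du v · Du w + DU v · DU w` for the metric pulled back by `(u, U)`. Differentiating
`g(e₂, e₂) ≡ 1` in `x` and in `y`, and `g(e₁, e₂) ≡ 0` in `y`, and using `u_xy = u_yx`, gives
`u_x u_yy + U_x U_yy = 0` and `u_y u_yy + U_y U_yy = 0`. The determinant of this linear system in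
`(u_yy, U_yy)` is `u_x U_y - U_x u_y`, whose square is `g(e₁, e₁) g(e₂, e₂) - g(e₁, e₂)² = y² ≠ 0`.
-/

open Filter Topology

lemma HasFDerivAt.eq_zero_of_eventuallyEq_const {𝕜 E F : Type*} [NontriviallyNormedField 𝕜]
    [NormedAddCommGroup E] [NormedSpace 𝕜 E] [NormedAddCommGroup F] [NormedSpace 𝕜 F]
    {f : E → F} {f' : E →L[𝕜] F} {p : E} {c : F}
    (hf : HasFDerivAt f f' p) (hc : f =ᶠ[𝓝 p] fun _ => c) : f' = 0 :=
  hf.unique ((hasFDerivAt_const c p).congr_of_eventuallyEq hc)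

lemma ContDiffAt.hasFDerivAt_fderiv_apply {𝕜 E F : Type*} [NontriviallyNormedField 𝕜]
    [NormedAddCommGroup E] [NormedSpace 𝕜 E] [NormedAddCommGroup F] [NormedSpace 𝕜 F]
    {f : E → F} {p : E} (hf : ContDiffAt 𝕜 2 f p) (v : E) :
    HasFDerivAt (fun q => fderiv 𝕜 f q v) ((fderiv 𝕜 (fderiv 𝕜 f) p).flip v) p := by
  have hD : DifferentiableAt 𝕜 (fderiv 𝕜 f) p :=
    (hf.fderiv_right (m := 1) le_rfl).differentiableAt one_ne_zero
  simpa using hD.hasFDerivAt.clm_apply (hasFDerivAt_const v p)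

section PulledBackMetric

variable {E : Type*} [NormedAddCommGroup E] [NormedSpace ℝ E] {u U : E → ℝ} {p : E}

/-- The product rule applied to `∂_z g(v, w) = 0`, for a locally constant coefficient of the
pulled-back metric. -/
lemma fderiv_fderiv_pullback_metric_eq_zero (hu : ContDiffAt ℝ 2 u p) (hU : ContDiffAt ℝ 2 U p)
    {v w : E} {c : ℝ}
    (hc : (fun q => fderiv ℝ u q v * fderiv ℝ u q w + fderiv ℝ U q v * fderiv ℝ U q w)
      =ᶠ[𝓝 p] fun _ => c) (z : E) :
    fderiv ℝ (fderiv ℝ u) p z v * fderiv ℝ u p w + fderiv ℝ u p v * fderiv ℝ (fderiv ℝ u) p z w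
      + (fderiv ℝ (fderiv ℝ U) p z v * fderiv ℝ U p w
        + fderiv ℝ U p v * fderiv ℝ (fderiv ℝ U) p z w) = 0 := by
  have hg := ((hu.hasFDerivAt_fderiv_apply v).mul (hu.hasFDerivAt_fderiv_apply w)).add
    ((hU.hasFDerivAt_fderiv_apply v).mul (hU.hasFDerivAt_fderiv_apply w))
  have := congrArg (fun L : E →L[ℝ] ℝ => L z) (hg.eq_zero_of_eventuallyEq_const hc)
  simp only [add_apply, smul_apply,
    ContinuousLinearMap.flip_apply, zero_apply, smul_eq_mul] at this
  linear_combination this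

end PulledBackMetric

lemma eq_zero_of_mul_add_mul_eq_zero {a b c d y s t : ℝ}
    (h1 : a ^ 2 + b ^ 2 = y ^ 2) (h2 : a * c + b * d = 0) (h3 : c ^ 2 + d ^ 2 = 1) (hy : y ≠ 0)
    (hs : a * s + b * t = 0) (ht : c * s + d * t = 0) : s = 0 ∧ t = 0 := by
  have hdet : a * d - b * c ≠ 0 := by
    have : (a * d - b * c) ^ 2 = y ^ 2 := by
      linear_combination (c ^ 2 + d ^ 2) * h1 + y ^ 2 * h3 - (a * c + b * d) * h2
    exact fun h => hy (pow_eq_zero_iff two_ne_zero |>.mp (by rw [← this, h]; ring))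
  constructor
  · exact (mul_eq_zero.mp (by linear_combination d * hs - b * ht)).resolve_left hdet
  · exact (mul_eq_zero.mp (by linear_combination a * ht - c * hs)).resolve_left hdet

theorem stmt_2 (Ω : Set (ℝ × ℝ)) (hΩ : IsOpen Ω)
    (u U : ℝ × ℝ → ℝ)
    (hu : ContDiffOn ℝ 2 u Ω) (hU : ContDiffOn ℝ 2 U Ω)
    (hy : ∀ p ∈ Ω, p.2 ≠ 0)
    (h1 : ∀ p ∈ Ω, (fderiv ℝ u p (1, 0)) ^ 2 + (fderiv ℝ U p (1, 0)) ^ 2 = p.2 ^ 2)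
    (h2 : ∀ p ∈ Ω, fderiv ℝ u p (1, 0) * fderiv ℝ u p (0, 1)
        + fderiv ℝ U p (1, 0) * fderiv ℝ U p (0, 1) = 0)
    (h3 : ∀ p ∈ Ω, (fderiv ℝ u p (0, 1)) ^ 2 + (fderiv ℝ U p (0, 1)) ^ 2 = 1) :
    ∀ p ∈ Ω, fderiv ℝ (fun q => fderiv ℝ u q (0, 1)) p (0, 1) = 0 ∧
      fderiv ℝ (fun q => fderiv ℝ U q (0, 1)) p (0, 1) = 0 := by
  intro p hp
  have hΩp := hΩ.mem_nhds hp
  have hu' := hu.contDiffAt hΩp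
  have hU' := hU.contDiffAt hΩp
  have hnorm : (fun q => fderiv ℝ u q (0, 1) * fderiv ℝ u q (0, 1)
      + fderiv ℝ U q (0, 1) * fderiv ℝ U q (0, 1)) =ᶠ[𝓝 p] fun _ => 1 := by
    filter_upwards [hΩp] with q hq
    linear_combination h3 q hq
  have horth := eventually_of_mem hΩp h2
  have hyy := fderiv_fderiv_pullback_metric_eq_zero hu' hU' hnorm (0, 1)
  have hxy := fderiv_fderiv_pullback_metric_eq_zero hu' hU' hnorm (1, 0)
  have hmixed := fderiv_fderiv_pullback_metric_eq_zero hu' hU' horth (0, 1)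
  rw [(hu'.isSymmSndFDerivAt minSmoothness_of_isRCLikeNormedField.le) (0, 1) (1, 0),
    (hU'.isSymmSndFDerivAt minSmoothness_of_isRCLikeNormedField.le) (0, 1) (1, 0)] at hmixed
  rw [(hu'.hasFDerivAt_fderiv_apply _).fderiv, (hU'.hasFDerivAt_fderiv_apply _).fderiv,
    ContinuousLinearMap.flip_apply, ContinuousLinearMap.flip_apply]
  exact eq_zero_of_mul_add_mul_eq_zero (h1 p hp) (h2 p hp) (h3 p hp) (hy p hp)
    (by linear_combination hmixed - hxy / 2) (by linear_combination hyy / 2)
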